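/- Let Z = [[A,C],[D,E]] satisfy Z^T F Z = F with A invertible. Then Z = y_1 y_2 where y_1 = [[A,0],[D, J(A^T)^{-1}J]] and y_2 = [[Id, A^{-1}C],[0,Id]], and both y_1 and y_2 satisfy y_i^T F y_i = F. -/

import Mathlib

/-!
Expanding `Zᵀ F Z = F` blockwise gives `Aᵀ J D = Dᵀ J A` and `Aᵀ J E - Dᵀ J C = J`. Since `J² = 1`,
these force the Schur complement `E - D A⁻¹ C` to be `J (Aᵀ)⁻¹ J`, which is exactly the
factorization `Z = y₁ y₂`. The lower factor `y₁` preserves `F` by a direct block computation, and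
then so does `y₂`, because `y₂ᵀ F y₂ = y₂ᵀ (y₁ᵀ F y₁) y₂ = Zᵀ F Z`.
-/

open Matrix

def Jmat (n : ℕ) : Matrix (Fin n) (Fin n) ℂ :=
  Matrix.of fun i j => if (i : ℕ) + (j : ℕ) + 1 = n then 1 else 0

def Fmat (n : ℕ) : Matrix (Fin n ⊕ Fin n) (Fin n ⊕ Fin n) ℂ :=
  Matrix.fromBlocks 0 (Jmat n) (-(Jmat n)) 0

lemma transpose_Jmat (n : ℕ) : (Jmat n)ᵀ = Jmat n := by
  ext i j
  simp only [transpose_apply, Jmat, of_apply]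
  congr 1
  simp only [eq_iff_iff]
  omega

lemma Jmat_mul_self (n : ℕ) : Jmat n * Jmat n = 1 := by
  ext i j
  rw [mul_apply, Finset.sum_eq_single (Fin.rev i)]
  · simp only [Jmat, of_apply, Fin.val_rev, one_apply, Fin.ext_iff]
    rw [if_pos (by omega), one_mul]
    congr 1
    simp only [eq_iff_iff]
    omega
  · intro k _ hk
    have hk' : (k : ℕ) ≠ n - (i + 1) := by rwa [Ne, Fin.ext_iff, Fin.val_rev] at hk
    simp only [Jmat, of_apply]
    rw [if_neg (by omega), zero_mul]
  · simp

section BlockForm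

variable {ι R : Type*} [Fintype ι] [CommRing R]

lemma transpose_mul_mul_eq_of_eq_mul {F Z P Q : Matrix ι ι R} (hZ : Z = P * Q)
    (hP : Pᵀ * F * P = F) : Qᵀ * F * Q = Zᵀ * F * Z := by
  calc Qᵀ * F * Q = Qᵀ * (Pᵀ * F * P) * Q := by rw [hP]
    _ = Zᵀ * F * Z := by simp only [hZ, transpose_mul, Matrix.mul_assoc]

lemma transpose_fromBlocks_mul_fromBlocks_mul (J A B C D : Matrix ι ι R) :
    (fromBlocks A B C D)ᵀ * fromBlocks 0 J (-J) 0 * fromBlocks A B C D =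
      fromBlocks (Aᵀ * J * C - Cᵀ * J * A) (Aᵀ * J * D - Cᵀ * J * B)
        (Bᵀ * J * C - Dᵀ * J * A) (Bᵀ * J * D - Dᵀ * J * B) := by
  simp only [fromBlocks_transpose, fromBlocks_multiply, Matrix.mul_zero,
    Matrix.mul_neg, Matrix.neg_mul, add_zero, zero_add, ← sub_eq_neg_add, Matrix.mul_assoc]

variable [DecidableEq ι]

lemma fromBlocks_mul_fromBlocks_one (A D S X : Matrix ι ι R) :
    fromBlocks A 0 D S * fromBlocks 1 X 0 1 = fromBlocks A (A * X) D (D * X + S) := by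
  simp only [fromBlocks_multiply, Matrix.mul_one, Matrix.mul_zero, add_zero]

variable {J A C D E : Matrix ι ι R}

lemma schur_complement_eq (hJ : J * J = 1) (hA : IsUnit A)
    (hAD : Aᵀ * J * D = Dᵀ * J * A) (hE : Aᵀ * J * E - Dᵀ * J * C = J) :
    E - D * (A⁻¹ * C) = J * Aᵀ⁻¹ * J := by
  refine sub_eq_of_eq_add' ?_
  have hA' := (isUnit_iff_isUnit_det A).mp hA
  have hAT : IsUnit Aᵀ.det := by rwa [det_transpose]
  have hDC : Aᵀ * J * (D * (A⁻¹ * C)) = Dᵀ * J * C := by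
    rw [← Matrix.mul_assoc, hAD, Matrix.mul_assoc _ A, mul_nonsing_inv_cancel_left _ _ hA']
  calc E = J * (Aᵀ⁻¹ * (Aᵀ * J * E)) := by
          rw [mul_assoc Aᵀ, nonsing_inv_mul_cancel_left _ _ hAT, ← mul_assoc, hJ, one_mul]
    _ = J * (Aᵀ⁻¹ * (Aᵀ * J * (D * (A⁻¹ * C)) + J)) := by
          rw [hDC, ← sub_eq_iff_eq_add'.mp hE]
    _ = D * (A⁻¹ * C) + J * Aᵀ⁻¹ * J := by
          rw [mul_assoc Aᵀ, mul_add, nonsing_inv_mul_cancel_left _ _ hAT, mul_add,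
            ← mul_assoc J J, hJ, one_mul, mul_assoc J]

lemma fromBlocks_lower_preserves_form (hJ : J * J = 1) (hJT : Jᵀ = J) (hA : IsUnit A)
    (hAD : Aᵀ * J * D = Dᵀ * J * A) :
    (fromBlocks A 0 D (J * Aᵀ⁻¹ * J))ᵀ * fromBlocks 0 J (-J) 0 *
      fromBlocks A 0 D (J * Aᵀ⁻¹ * J) = fromBlocks 0 J (-J) 0 := by
  have hA' := (isUnit_iff_isUnit_det A).mp hA
  have hAT : IsUnit Aᵀ.det := by rwa [det_transpose]
  rw [transpose_fromBlocks_mul_fromBlocks_mul]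
  have hJJ (X : Matrix ι ι R) : J * (J * X) = X := by rw [← Matrix.mul_assoc, hJ, Matrix.one_mul]
  simp only [transpose_mul, ← transpose_nonsing_inv, transpose_transpose, hJT, hAD, sub_self,
    transpose_zero, Matrix.zero_mul, Matrix.mul_zero, sub_zero, zero_sub, Matrix.mul_assoc, hJJ]
  rw [transpose_nonsing_inv, mul_nonsing_inv_cancel_left _ _ hAT, nonsing_inv_mul _ hA',
    Matrix.mul_one]

end BlockForm

theorem stmt9 (n : ℕ) (A C D E : Matrix (Fin n) (Fin n) ℂ)
    (hZ : (Matrix.fromBlocks A C D E)ᵀ * Fmat n * Matrix.fromBlocks A C D E = Fmat n)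
    (hA : IsUnit A) :
    Matrix.fromBlocks A C D E
        = Matrix.fromBlocks A 0 D (Jmat n * (Aᵀ)⁻¹ * Jmat n)
            * Matrix.fromBlocks 1 (A⁻¹ * C) 0 1 ∧
    (Matrix.fromBlocks A 0 D (Jmat n * (Aᵀ)⁻¹ * Jmat n))ᵀ * Fmat n
        * Matrix.fromBlocks A 0 D (Jmat n * (Aᵀ)⁻¹ * Jmat n) = Fmat n ∧
    (Matrix.fromBlocks 1 (A⁻¹ * C) 0 1)ᵀ * Fmat n
        * Matrix.fromBlocks 1 (A⁻¹ * C) 0 1 = Fmat n := by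
  rw [Fmat] at hZ ⊢
  obtain ⟨hAD, hE⟩ : Aᵀ * Jmat n * D = Dᵀ * Jmat n * A ∧
      Aᵀ * Jmat n * E - Dᵀ * Jmat n * C = Jmat n := by
    rw [transpose_fromBlocks_mul_fromBlocks_mul, fromBlocks_inj] at hZ
    exact ⟨sub_eq_zero.mp hZ.1, hZ.2.1⟩
  have hfactor : fromBlocks A C D E = fromBlocks A 0 D (Jmat n * Aᵀ⁻¹ * Jmat n) *
      fromBlocks 1 (A⁻¹ * C) 0 1 := by
    rw [fromBlocks_mul_fromBlocks_one,
      mul_nonsing_inv_cancel_left _ _ ((isUnit_iff_isUnit_det A).mp hA),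
      ← eq_add_of_sub_eq' (schur_complement_eq (Jmat_mul_self n) hA hAD hE)]
  have hlower := fromBlocks_lower_preserves_form (Jmat_mul_self n) (transpose_Jmat n) hA hAD
  exact ⟨hfactor, hlower, (transpose_mul_mul_eq_of_eq_mul hfactor hlower).trans hZ⟩
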